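/- arXiv:math/0103147 — 3 statements merged into one kernel-verified Lean document; each statement's English description precedes it below -/
import Mathlib

section
/- Let 𝔤 be a Lie algebra over a field k and r ∈ 𝔤 ⊗ 𝔤 an element satisfying the classical Yang–Baxter equation [r₁₂,r₁₃] + [r₁₂,r₂₃] + [r₁₃,r₂₃] = 0 and such that r + σ(r) is ad-invariant (σ is the flip). Then the linear map r₊ : 𝔤* → 𝔤 defined by r₊(ℓ) = (ℓ ⊗ id)(r) is a Lie algebra homomorphism, where 𝔤* carries the Lie bracket [ℓ,m] = ad*_{r₊(ℓ)}(m) − ad*_{r₋(m)}(ℓ) with r₋(ℓ) = −(id ⊗ ℓ)(r). -/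
open TensorProduct

/- We represent the element `r ∈ 𝔤 ⊗ 𝔤` by a finite family of decomposables,
`r = ∑ i, a i ⊗ b i`.  Then `r₊(ℓ) = (ℓ ⊗ id)(r) = ∑ i, ℓ(a i) • b i` and
`r₋(ℓ) = -(id ⊗ ℓ)(r) = -∑ i, ℓ(b i) • a i`. -/

/-- The linear map `r₊ : 𝔤* → 𝔤`. -/
noncomputable def rPlus (k : Type*) [Field k] {L : Type*} [LieRing L] [LieAlgebra k L]
    {ι : Type*} [Fintype ι] (a b : ι → L) : Module.Dual k L →ₗ[k] L where
  toFun ℓ := ∑ i, ℓ (a i) • b i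
  map_add' ℓ m := by simp [add_smul, Finset.sum_add_distrib]
  map_smul' c ℓ := by simp [Finset.smul_sum, smul_smul]

/-- The linear map `r₋ : 𝔤* → 𝔤`. -/
noncomputable def rMinus (k : Type*) [Field k] {L : Type*} [LieRing L] [LieAlgebra k L]
    {ι : Type*} [Fintype ι] (a b : ι → L) : Module.Dual k L →ₗ[k] L where
  toFun ℓ := -∑ i, ℓ (b i) • a i
  map_add' ℓ m := by simp [add_smul, Finset.sum_add_distrib]; abel
  map_smul' c ℓ := by simp [Finset.smul_sum, smul_smul]

/-- The coadjoint action `ad*_x(m) = -m ∘ ad_x`, i.e. `(ad*_x m)(y) = -m([x,y])`. -/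
noncomputable def adStar (k : Type*) [Field k] {L : Type*} [LieRing L] [LieAlgebra k L]
    (x : L) (m : Module.Dual k L) : Module.Dual k L :=
  -(m ∘ₗ (LieAlgebra.ad k L x))

/-- The Lie bracket on `𝔤*`: `[ℓ,m] = ad*_{r₊(ℓ)}(m) − ad*_{r₋(m)}(ℓ)`. -/
noncomputable def dualBracket (k : Type*) [Field k] {L : Type*} [LieRing L] [LieAlgebra k L]
    {ι : Type*} [Fintype ι] (a b : ι → L) (ℓ m : Module.Dual k L) : Module.Dual k L :=
  adStar k (rPlus k a b ℓ) m - adStar k (rMinus k a b m) ℓ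

/-! Contracting the classical Yang–Baxter tensor with `ℓ ⊗ m ⊗ id` gives three double sums:
the first two add up to `-r₊[ℓ,m]` and the third is `[r₊ℓ, r₊m]`. -/

section Contraction

variable {R M : Type*} [CommRing R] [AddCommGroup M] [Module R M]

noncomputable def contractFirstTwo (ℓ m : Module.Dual R M) : M ⊗[R] (M ⊗[R] M) →ₗ[R] M :=
  lift (ℓ.smulRight (lift (m.smulRight LinearMap.id)))

@[simp]
theorem contractFirstTwo_tmul (ℓ m : Module.Dual R M) (x y z : M) :
    contractFirstTwo ℓ m (x ⊗ₜ (y ⊗ₜ z)) = (ℓ x * m y) • z := by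
  simp [contractFirstTwo, smul_smul]

end Contraction

section ClassicalR

variable {k : Type*} [Field k] {L : Type*} [LieRing L] [LieAlgebra k L]
  {ι : Type*} [Fintype ι] (a b : ι → L)

theorem rPlus_apply (ℓ : Module.Dual k L) : rPlus k a b ℓ = ∑ i, ℓ (a i) • b i := rfl

theorem dualBracket_apply (ℓ m : Module.Dual k L) (y : L) :
    dualBracket k a b ℓ m y = -∑ i, ℓ (a i) * m ⁅b i, y⁆ - ∑ i, m (b i) * ℓ ⁅a i, y⁆ := by
  simp [dualBracket, adStar, rPlus, rMinus]

theorem rPlus_dualBracket (ℓ m : Module.Dual k L) :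
    rPlus k a b (dualBracket k a b ℓ m) =
      -∑ i, ∑ j, (ℓ (a i) * m ⁅b i, a j⁆ + m (b i) * ℓ ⁅a i, a j⁆) • b j := by
  simp only [rPlus_apply, dualBracket_apply, sub_smul, neg_smul, Finset.sum_smul]
  rw [Finset.sum_comm]
  simp only [add_smul, Finset.sum_add_distrib, Finset.sum_sub_distrib, Finset.sum_neg_distrib]
  abel

theorem lie_rPlus_rPlus (ℓ m : Module.Dual k L) :
    ⁅rPlus k a b ℓ, rPlus k a b m⁆ = ∑ i, ∑ j, (ℓ (a i) * m (a j)) • ⁅b i, b j⁆ := by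
  simp only [rPlus_apply, sum_lie, lie_sum, smul_lie, lie_smul, Finset.smul_sum, smul_smul]
  rw [Finset.sum_comm]
  simp only [mul_comm]

theorem contractFirstTwo_classicalYangBaxter
    (hCYBE : ∑ i, ∑ j,
        (⁅a i, a j⁆ ⊗ₜ[k] (b i ⊗ₜ[k] b j) + a i ⊗ₜ[k] (⁅b i, a j⁆ ⊗ₜ[k] b j)
          + a i ⊗ₜ[k] (a j ⊗ₜ[k] ⁅b i, b j⁆)) = (0 : L ⊗[k] (L ⊗[k] L)))
    (ℓ m : Module.Dual k L) :
    ∑ i, ∑ j, ((ℓ (a i) * m ⁅b i, a j⁆ + m (b i) * ℓ ⁅a i, a j⁆) • b j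
      + (ℓ (a i) * m (a j)) • ⁅b i, b j⁆) = 0 := by
  have key := congrArg (contractFirstTwo ℓ m) hCYBE
  simp only [map_sum, map_add, contractFirstTwo_tmul, map_zero] at key
  rw [← key]
  refine Finset.sum_congr rfl fun i _ => Finset.sum_congr rfl fun j _ => ?_
  module

end ClassicalR

theorem rPlus_is_lie_hom_general (k : Type*) [Field k] {L : Type*} [LieRing L] [LieAlgebra k L]
    {ι : Type*} [Fintype ι] (a b : ι → L)
    (hCYBE : ∑ i, ∑ j,
        (⁅a i, a j⁆ ⊗ₜ[k] (b i ⊗ₜ[k] b j) + a i ⊗ₜ[k] (⁅b i, a j⁆ ⊗ₜ[k] b j)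
          + a i ⊗ₜ[k] (a j ⊗ₜ[k] ⁅b i, b j⁆)) = (0 : L ⊗[k] (L ⊗[k] L))) :
    ∀ ℓ m : Module.Dual k L,
      rPlus k a b (dualBracket k a b ℓ m) = ⁅rPlus k a b ℓ, rPlus k a b m⁆ := by
  intro ℓ m
  rw [rPlus_dualBracket, lie_rPlus_rPlus, neg_eq_iff_add_eq_zero]
  simpa only [← Finset.sum_add_distrib] using contractFirstTwo_classicalYangBaxter a b hCYBE ℓ m

/-- If `r = ∑ i, a i ⊗ b i ∈ 𝔤 ⊗ 𝔤` satisfies the classical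
Yang–Baxter equation `[r₁₂,r₁₃] + [r₁₂,r₂₃] + [r₁₃,r₂₃] = 0` and `r + σ(r)` is
ad-invariant, then `r₊ : 𝔤* → 𝔤` is a homomorphism of Lie algebras, where `𝔤*`
carries the bracket `[ℓ,m] = ad*_{r₊(ℓ)}(m) − ad*_{r₋(m)}(ℓ)`. -/
theorem rPlus_is_lie_hom (k : Type*) [Field k] {L : Type*} [LieRing L] [LieAlgebra k L]
    [FiniteDimensional k L] {ι : Type*} [Fintype ι] (a b : ι → L)
    (hCYBE : ∑ i, ∑ j,
        (⁅a i, a j⁆ ⊗ₜ[k] (b i ⊗ₜ[k] b j) + a i ⊗ₜ[k] (⁅b i, a j⁆ ⊗ₜ[k] b j)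
          + a i ⊗ₜ[k] (a j ⊗ₜ[k] ⁅b i, b j⁆)) = (0 : L ⊗[k] (L ⊗[k] L)))
    (hinv : ∀ x : L, ∑ i,
        (⁅x, a i⁆ ⊗ₜ[k] b i + a i ⊗ₜ[k] ⁅x, b i⁆
          + ⁅x, b i⁆ ⊗ₜ[k] a i + b i ⊗ₜ[k] ⁅x, a i⁆) = (0 : L ⊗[k] L)) :
    ∀ ℓ m : Module.Dual k L,
      rPlus k a b (dualBracket k a b ℓ m) = ⁅rPlus k a b ℓ, rPlus k a b m⁆ :=
  rPlus_is_lie_hom_general k a b hCYBE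
end

section
/- Let 𝔤 be a factorizable Lie bialgebra with maps r₊, r₋ : 𝔤* → 𝔤 as above, 𝔤± = Im(r±), 𝔫± = r±(ker r∓). Then the map θ : 𝔤₊/𝔫₊ → 𝔤₋/𝔫₋ sending the class of r₊(ℓ) mod 𝔫₊ to the class of r₋(ℓ) mod 𝔫₋ is a well-defined Lie algebra isomorphism. -/
open TensorProduct

set_option maxHeartbeats 1600000 in
/-- For a factorizable Lie bialgebra, the map
`θ : 𝔤₊/𝔫₊ → 𝔤₋/𝔫₋` sending the class of `r₊(ℓ)` to the class of `r₋(ℓ)` is a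
well-defined Lie algebra isomorphism.  Here `𝔤± = Im r±` (Lie subalgebras of
`𝔤`, which is the content of `hgp`, `hgm`) and `𝔫± = r±(ker r∓)` are ideals. -/
theorem theta_iso (k : Type*) [Field k] {L : Type*} [LieRing L] [LieAlgebra k L]
    [FiniteDimensional k L] {ι : Type*} [Fintype ι] (a b : ι → L)
    (hCYBE : ∑ i, ∑ j,
        (⁅a i, a j⁆ ⊗ₜ[k] (b i ⊗ₜ[k] b j) + a i ⊗ₜ[k] (⁅b i, a j⁆ ⊗ₜ[k] b j)
          + a i ⊗ₜ[k] (a j ⊗ₜ[k] ⁅b i, b j⁆)) = (0 : L ⊗[k] (L ⊗[k] L)))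
    (hinv : ∀ x : L, ∑ i,
        (⁅x, a i⁆ ⊗ₜ[k] b i + a i ⊗ₜ[k] ⁅x, b i⁆
          + ⁅x, b i⁆ ⊗ₜ[k] a i + b i ⊗ₜ[k] ⁅x, a i⁆) = (0 : L ⊗[k] L))
    (hnondeg : Function.Bijective fun ℓ : Module.Dual k L => ∑ i, (ℓ (a i) • b i + ℓ (b i) • a i))
    (hplus : ∀ ℓ m : Module.Dual k L,
      rPlus k a b (dualBracket k a b ℓ m) = ⁅rPlus k a b ℓ, rPlus k a b m⁆)
    (hminus : ∀ ℓ m : Module.Dual k L,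
      rMinus k a b (dualBracket k a b ℓ m) = ⁅rMinus k a b ℓ, rMinus k a b m⁆)
    (hgp : ∀ x y : L, x ∈ LinearMap.range (rPlus k a b) → y ∈ LinearMap.range (rPlus k a b) →
      ⁅x, y⁆ ∈ LinearMap.range (rPlus k a b))
    (hgm : ∀ x y : L, x ∈ LinearMap.range (rMinus k a b) → y ∈ LinearMap.range (rMinus k a b) →
      ⁅x, y⁆ ∈ LinearMap.range (rMinus k a b)) :
    ∃ θ : (↥(LinearMap.range (rPlus k a b)) ⧸
            (Submodule.map (rPlus k a b) (LinearMap.ker (rMinus k a b))).comap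
              (LinearMap.range (rPlus k a b)).subtype) ≃ₗ[k]
          (↥(LinearMap.range (rMinus k a b)) ⧸
            (Submodule.map (rMinus k a b) (LinearMap.ker (rPlus k a b))).comap
              (LinearMap.range (rMinus k a b)).subtype),
      (∀ ℓ : Module.Dual k L,
        θ (Submodule.Quotient.mk ⟨rPlus k a b ℓ, LinearMap.mem_range_self _ ℓ⟩)
          = Submodule.Quotient.mk ⟨rMinus k a b ℓ, LinearMap.mem_range_self _ ℓ⟩) ∧
      (∀ x y : ↥(LinearMap.range (rPlus k a b)), ∀ x' y' : ↥(LinearMap.range (rMinus k a b)),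
        θ (Submodule.Quotient.mk x) = Submodule.Quotient.mk x' →
        θ (Submodule.Quotient.mk y) = Submodule.Quotient.mk y' →
        θ (Submodule.Quotient.mk ⟨⁅(x : L), (y : L)⁆, hgp _ _ x.2 y.2⟩)
          = Submodule.Quotient.mk ⟨⁅(x' : L), (y' : L)⁆, hgm _ _ x'.2 y'.2⟩) := by
    classical
  set rp := rPlus k a b with hrp
  set rm := rMinus k a b with hrm
  set Np := (Submodule.map rp (LinearMap.ker rm)).comap (LinearMap.range rp).subtype with hNp
  set Nm := (Submodule.map rm (LinearMap.ker rp)).comap (LinearMap.range rm).subtype with hNm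
  -- key ideal lemmas
  have keym : ∀ ν μ : Module.Dual k L, rp μ = 0 →
      ⁅rm ν, rm μ⁆ ∈ Submodule.map rm (LinearMap.ker rp) := by
    intro ν μ hμ
    refine ⟨dualBracket k a b ν μ, ?_, hminus ν μ⟩
    simp [LinearMap.mem_ker, hplus ν μ, hμ]
  have keyp : ∀ ν μ : Module.Dual k L, rm μ = 0 →
      ⁅rp ν, rp μ⁆ ∈ Submodule.map rp (LinearMap.ker rm) := by
    intro ν μ hμ
    refine ⟨dualBracket k a b ν μ, ?_, hplus ν μ⟩
    simp [LinearMap.mem_ker, hminus ν μ, hμ]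
  -- descend rm through ker rp
  have hker_pm : LinearMap.ker rp ≤ LinearMap.ker (Nm.mkQ ∘ₗ rm.rangeRestrict) := by
    intro ℓ hℓ
    simp only [LinearMap.mem_ker, LinearMap.comp_apply, Submodule.mkQ_apply,
      Submodule.Quotient.mk_eq_zero, hNm, Submodule.mem_comap, Submodule.coe_subtype]
    exact ⟨ℓ, hℓ, rfl⟩
  have hker_mp : LinearMap.ker rm ≤ LinearMap.ker (Np.mkQ ∘ₗ rp.rangeRestrict) := by
    intro ℓ hℓ
    simp only [LinearMap.mem_ker, LinearMap.comp_apply, Submodule.mkQ_apply,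
      Submodule.Quotient.mk_eq_zero, hNp, Submodule.mem_comap, Submodule.coe_subtype]
    exact ⟨ℓ, hℓ, rfl⟩
  set fP := ((LinearMap.ker rp).liftQ (Nm.mkQ ∘ₗ rm.rangeRestrict) hker_pm) ∘ₗ
      (rp.quotKerEquivRange).symm.toLinearMap with hfP
  set fM := ((LinearMap.ker rm).liftQ (Np.mkQ ∘ₗ rp.rangeRestrict) hker_mp) ∘ₗ
      (rm.quotKerEquivRange).symm.toLinearMap with hfM
  have fP_apply : ∀ (ℓ : Module.Dual k L) (h : rp ℓ ∈ LinearMap.range rp),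
      fP ⟨rp ℓ, h⟩ = Submodule.Quotient.mk ⟨rm ℓ, LinearMap.mem_range_self _ ℓ⟩ := by
    intro ℓ h
    have : (rp.quotKerEquivRange).symm ⟨rp ℓ, h⟩ = (LinearMap.ker rp).mkQ ℓ :=
      LinearMap.quotKerEquivRange_symm_apply_image rp ℓ h
    simp only [hfP, LinearMap.comp_apply, LinearEquiv.coe_coe, this, Submodule.mkQ_apply,
      Submodule.liftQ_apply]
    rfl
  have fM_apply : ∀ (ℓ : Module.Dual k L) (h : rm ℓ ∈ LinearMap.range rm),
      fM ⟨rm ℓ, h⟩ = Submodule.Quotient.mk ⟨rp ℓ, LinearMap.mem_range_self _ ℓ⟩ := by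
    intro ℓ h
    have : (rm.quotKerEquivRange).symm ⟨rm ℓ, h⟩ = (LinearMap.ker rm).mkQ ℓ :=
      LinearMap.quotKerEquivRange_symm_apply_image rm ℓ h
    simp only [hfM, LinearMap.comp_apply, LinearEquiv.coe_coe, this, Submodule.mkQ_apply,
      Submodule.liftQ_apply]
    rfl
  have hNpf : Np ≤ LinearMap.ker fP := by
    rintro x hx
    obtain ⟨ℓ, hℓker, hℓ⟩ := hx
    have hx' : x = ⟨rp ℓ, LinearMap.mem_range_self _ ℓ⟩ := Subtype.ext hℓ.symm
    rw [LinearMap.mem_ker, hx', fP_apply ℓ]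
    have h0 : (⟨rm ℓ, LinearMap.mem_range_self _ ℓ⟩ : ↥(LinearMap.range rm)) = 0 :=
      Subtype.ext (LinearMap.mem_ker.mp hℓker)
    rw [h0, Submodule.Quotient.mk_zero]
  have hNmf : Nm ≤ LinearMap.ker fM := by
    rintro x hx
    obtain ⟨ℓ, hℓker, hℓ⟩ := hx
    have hx' : x = ⟨rm ℓ, LinearMap.mem_range_self _ ℓ⟩ := Subtype.ext hℓ.symm
    rw [LinearMap.mem_ker, hx', fM_apply ℓ]
    have h0 : (⟨rp ℓ, LinearMap.mem_range_self _ ℓ⟩ : ↥(LinearMap.range rp)) = 0 :=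
      Subtype.ext (LinearMap.mem_ker.mp hℓker)
    rw [h0, Submodule.Quotient.mk_zero]
  set TP := Np.liftQ fP hNpf with hTP
  set TM := Nm.liftQ fM hNmf with hTM
  have TP_apply : ∀ (ℓ : Module.Dual k L) (h : rp ℓ ∈ LinearMap.range rp),
      TP (Submodule.Quotient.mk ⟨rp ℓ, h⟩)
        = Submodule.Quotient.mk ⟨rm ℓ, LinearMap.mem_range_self _ ℓ⟩ := by
    intro ℓ h
    rw [hTP, Submodule.liftQ_apply, fP_apply]
  have TM_apply : ∀ (ℓ : Module.Dual k L) (h : rm ℓ ∈ LinearMap.range rm),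
      TM (Submodule.Quotient.mk ⟨rm ℓ, h⟩)
        = Submodule.Quotient.mk ⟨rp ℓ, LinearMap.mem_range_self _ ℓ⟩ := by
    intro ℓ h
    rw [hTM, Submodule.liftQ_apply, fM_apply]
  have hcomp₁ : TP ∘ₗ TM = LinearMap.id := by
    refine LinearMap.ext fun q => ?_
    obtain ⟨x, rfl⟩ := Submodule.Quotient.mk_surjective _ q
    obtain ⟨ℓ, hℓ⟩ := x.2
    have hx : x = ⟨rm ℓ, LinearMap.mem_range_self _ ℓ⟩ := Subtype.ext hℓ.symm
    rw [hx]
    simp only [LinearMap.comp_apply, LinearMap.id_apply]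
    rw [TM_apply, TP_apply]
  have hcomp₂ : TM ∘ₗ TP = LinearMap.id := by
    refine LinearMap.ext fun q => ?_
    obtain ⟨x, rfl⟩ := Submodule.Quotient.mk_surjective _ q
    obtain ⟨ℓ, hℓ⟩ := x.2
    have hx : x = ⟨rp ℓ, LinearMap.mem_range_self _ ℓ⟩ := Subtype.ext hℓ.symm
    rw [hx]
    simp only [LinearMap.comp_apply, LinearMap.id_apply]
    rw [TP_apply, TM_apply]
  refine ⟨LinearEquiv.ofLinear TP TM hcomp₁ hcomp₂, ?_, ?_⟩
  · intro ℓ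
    exact TP_apply ℓ _
  · intro x y x' y' hx hy
    obtain ⟨ℓ, hℓ⟩ := x.2
    obtain ⟨m, hm⟩ := y.2
    have hx0 : x = ⟨rp ℓ, LinearMap.mem_range_self _ ℓ⟩ := Subtype.ext hℓ.symm
    have hy0 : y = ⟨rp m, LinearMap.mem_range_self _ m⟩ := Subtype.ext hm.symm
    rw [hx0, LinearEquiv.ofLinear_apply, TP_apply] at hx
    rw [hy0, LinearEquiv.ofLinear_apply, TP_apply] at hy
    -- extract memberships
    rw [Submodule.Quotient.eq] at hx hy
    rw [hNm, Submodule.mem_comap] at hx hy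
    simp only [Submodule.coe_subtype, AddSubgroupClass.coe_sub] at hx hy
    -- the bracket computation
    have hbr : (⁅(x : L), (y : L)⁆ : L) = rp (dualBracket k a b ℓ m) := by
      rw [hx0, hy0, hplus]
    have hbr' : (⟨⁅(x : L), (y : L)⁆, hgp _ _ x.2 y.2⟩ : ↥(LinearMap.range rp))
        = ⟨rp (dualBracket k a b ℓ m), LinearMap.mem_range_self _ _⟩ := Subtype.ext hbr
    have goal1 := TP_apply (dualBracket k a b ℓ m) (LinearMap.mem_range_self _ _)
    rw [hbr', LinearEquiv.ofLinear_apply, goal1]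
    rw [Submodule.Quotient.eq, hNm, Submodule.mem_comap]
    simp only [Submodule.coe_subtype, AddSubgroupClass.coe_sub]
    have hrmbr : rm (dualBracket k a b ℓ m) = ⁅rm ℓ, rm m⁆ := hminus ℓ m
    rw [hrmbr]
    -- x' = rm ℓ + n₁, y' = rm m + n₂ with n₁ n₂ ∈ 𝔫₋
    obtain ⟨μ, hμker, hμ⟩ := hx
    obtain ⟨ν, hνker, hν⟩ := hy
    have hx'' : (x' : L) = rm (ℓ - μ) := by
      rw [map_sub]; rw [hμ]; abel
    have hy'' : (y' : L) = rm (m - ν) := by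
      rw [map_sub]; rw [hν]; abel
    have expand : ⁅rm ℓ, rm m⁆ - ⁅(x' : L), (y' : L)⁆
        = ⁅rm μ, rm (m - ν)⁆ + ⁅rm ℓ, rm ν⁆ := by
      rw [hx'', hy'']
      have h1 : rm ℓ = rm (ℓ - μ) + rm μ := by rw [map_sub]; abel
      have h2 : rm m = rm (m - ν) + rm ν := by rw [map_sub]; abel
      rw [h1, h2]
      simp only [add_lie, lie_add]
      abel
    rw [expand]
    have hμ0 : rp μ = 0 := hμker
    have hν0 : rp ν = 0 := hνker
    refine Submodule.add_mem _ ?_ (keym ℓ ν hν0)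
    have := keym (m - ν) μ hμ0
    have hskew : ⁅rm μ, rm (m - ν)⁆ = -⁅rm (m - ν), rm μ⁆ := (lie_skew _ _).symm
    rw [hskew]
    exact Submodule.neg_mem _ this
end

section
/- Let G be a connected complex semisimple Lie group with opposite Borels B± = H N± and Weyl group W. Every semisimple element g ∈ G lies in the image of both maps N⁺ × B⁻ → G, (n₊, b₋) ↦ n₊ b₋ n₊⁻¹ and N⁻ × B⁺ → G, (n₋, b₊) ↦ n₋ b₊ n₋⁻¹; i.e., there exist n± ∈ N± and b∓ ∈ B∓ with g = n₊ b₋ n₊⁻¹ = n₋ b₊ n₋⁻¹. -/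
/-- Auxiliary lemma: one direction of the conjugation statement, stated
abstractly so it can be applied to both `(B⁺, N⁺, B⁻, N⁻)` and its swap. -/
theorem semisimple_conjugate_aux
    {G : Type*} [Group G] (Bp Bm Np Nm Hh : Subgroup G)
    (W : Type*) (wbar : W → G)
    (hHm : Hh ≤ Bm) (hNmB : Nm ≤ Bm)
    (hBruhat : ∀ u : G, ∃ w : W, ∃ b ∈ Bp, ∃ n ∈ Np,
      u = b * wbar w * n ∧ wbar w * n * (wbar w)⁻¹ ∈ Nm)
    (hwH : ∀ (w : W), ∀ h ∈ Hh, wbar w * h * (wbar w)⁻¹ ∈ Hh)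
    (hBp : ∀ b ∈ Bp, ∃ n ∈ Np, ∃ h ∈ Hh, b = n * h)
    (u h : G) (hh : h ∈ Hh) :
    ∃ np ∈ Np, ∃ bm ∈ Bm, u * h * u⁻¹ = np * bm * np⁻¹ := by
  obtain ⟨w, b, hb, n, hn, hu, hm⟩ := hBruhat u
  obtain ⟨np, hnp, hp, hhp, hb'⟩ := hBp b hb
  refine ⟨np, hnp,
    hp * (wbar w * n * (wbar w)⁻¹) * (wbar w * h * (wbar w)⁻¹) *
      (wbar w * n * (wbar w)⁻¹)⁻¹ * hp⁻¹, ?_, ?_⟩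
  · exact mul_mem (mul_mem (mul_mem (mul_mem (hHm hhp) (hNmB hm))
      (hHm (hwH w h hh))) (inv_mem (hNmB hm))) (inv_mem (hHm hhp))
  · subst hu hb'
    group


/-- Let `G` be a connected complex semisimple Lie group with
opposite Borel subgroups `B± = H N±` and Weyl group `W` (with representatives
`w̄ ∈ N(H)`).  Every semisimple element `g ∈ G` (i.e. `g = u h u⁻¹` with
`h ∈ H`) can be written as `g = n₊ b₋ n₊⁻¹` with `n₊ ∈ N⁺`, `b₋ ∈ B⁻`, and as
`g = n₋ b₊ n₋⁻¹` with `n₋ ∈ N⁻`, `b₊ ∈ B⁺`.  The group-theoretic input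
(Bruhat decomposition, `B± = N± H`, normalization of `H` by the `w̄`) is
recorded in the hypotheses. -/
theorem semisimple_conjugate_into_borels
    {G : Type*} [Group G] (Bp Bm Np Nm Hh : Subgroup G)
    (W : Type*) (wbar : W → G)
    (hHp : Hh ≤ Bp) (hHm : Hh ≤ Bm) (hNpB : Np ≤ Bp) (hNmB : Nm ≤ Bm)
    -- Bruhat decomposition `G = ⊔_w B⁺ w̄ N⁺_w`, where `w̄ N⁺_w w̄⁻¹ ⊆ N⁻`
    (hBruhat : ∀ u : G, ∃ w : W, ∃ b ∈ Bp, ∃ n ∈ Np,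
      u = b * wbar w * n ∧ wbar w * n * (wbar w)⁻¹ ∈ Nm)
    -- and the opposite Bruhat decomposition
    (hBruhat' : ∀ u : G, ∃ w : W, ∃ b ∈ Bm, ∃ n ∈ Nm,
      u = b * wbar w * n ∧ wbar w * n * (wbar w)⁻¹ ∈ Np)
    -- the representatives `w̄` normalize `H`
    (hwH : ∀ (w : W), ∀ h ∈ Hh, wbar w * h * (wbar w)⁻¹ ∈ Hh)
    -- `B⁺ = N⁺ H` and `B⁻ = N⁻ H`
    (hBp : ∀ b ∈ Bp, ∃ n ∈ Np, ∃ h ∈ Hh, b = n * h)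
    (hBm : ∀ b ∈ Bm, ∃ n ∈ Nm, ∃ h ∈ Hh, b = n * h)
    -- a semisimple element
    (g : G) (hg : ∃ u : G, ∃ h ∈ Hh, g = u * h * u⁻¹) :
    (∃ np ∈ Np, ∃ bm ∈ Bm, g = np * bm * np⁻¹) ∧
    (∃ nm ∈ Nm, ∃ bp ∈ Bp, g = nm * bp * nm⁻¹) := by
  obtain ⟨u, h, hh, rfl⟩ := hg
  exact ⟨semisimple_conjugate_aux Bp Bm Np Nm Hh W wbar hHm hNmB hBruhat hwH hBp u h hh,
    semisimple_conjugate_aux Bm Bp Nm Np Hh W wbar hHp hNpB hBruhat' hwH hBm u h hh⟩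
end
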